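/- arXiv:2412.00040 — 5 statements merged into one kernel-verified Lean document; each statement's English description precedes it below -/
import Mathlib

section
/- Let n be a nonnegative integer and let v > −1 be a real number. Then ∑_{k=0}^{n} (−1)^k · C(n,k) · 2^{−k} · B(2k+v, (2k+v)/2) · B(k+v, v/2)^{−1} equals 2^{−n} · C(n, n/2) · B((n+v)/2, v/2)^{−1} if n is even, and equals 0 if n is odd. -/
/-!
Legendre's duplication formula turns the `k`-th summand into `Γ(v/2+1)/√π · C(n,k) · t_v(k)` with
`t_v(k) = 2^v (-2)^k Γ(k + v/2 + 1/2) / Γ(k + v + 1)`. Applying Pascal's rule twice and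
`Γ(x+1) = x Γ(x)`, the sums `S_n(v) = ∑ C(n,k) t_v(k)` satisfy
`S_{n+2}(v) = S_n(v) - (v+1)/2 · S_n(v+2)`, a recurrence shared by `Γ((n+1)/2) / Γ((n+v)/2+1)`
(for even `n`) and by `0` (for odd `n`). Since `S_0(v) = Γ(1/2)/Γ(v/2+1)` (duplication again) and
`S_1(v) = 0`, induction on `n` in steps of two, for all `v > -1` at once, identifies `S_n(v)`.
For `n = 2m` the value is turned into the stated one by `Γ(m + 1/2) = √π C(2m,m) m! / 4^m`.
-/

open Real

/-- Generalized binomial coefficient `B(a,b) = Γ(a+1)/(Γ(b+1)·Γ(a−b+1))`. -/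
noncomputable def gbinom (a b : ℝ) : ℝ :=
  Real.Gamma (a + 1) / (Real.Gamma (b + 1) * Real.Gamma (a - b + 1))

open Finset
open scoped Nat

theorem Finset.sum_range_choose_succ_mul {R : Type*} [CommSemiring R] (f : ℕ → R) (n : ℕ) :
    ∑ k ∈ range (n + 2), ((n + 1).choose k : R) * f k =
      ∑ k ∈ range (n + 1), (n.choose k : R) * (f k + f (k + 1)) := by
  simpa [mul_add, sum_add_distrib] using sum_choose_succ_mul (fun k _ => f k) n

theorem Finset.sum_range_choose_add_two_mul {R : Type*} [CommSemiring R] (f : ℕ → R) (n : ℕ) :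
    ∑ k ∈ range (n + 3), ((n + 2).choose k : R) * f k =
      ∑ k ∈ range (n + 1), (n.choose k : R) * (f k + 2 * f (k + 1) + f (k + 2)) := by
  rw [sum_range_choose_succ_mul, sum_range_choose_succ_mul]
  exact sum_congr rfl fun k _ => by ring

theorem Real.Gamma_add_one_div_Gamma_add_one_sub {x y : ℝ} (hx : x ≠ 0) (hy : y ≠ 0) :
    Gamma (x + 1) / Gamma (y + 1) - Gamma x / Gamma y = (x - y) * Gamma x / Gamma (y + 1) := by
  rw [Gamma_add_one hx, Gamma_add_one hy]
  rcases eq_or_ne (Gamma y) 0 with h | h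
  · simp [h]
  · field_simp

theorem Real.Gamma_add_half_mul_Gamma_add_one (s : ℝ) :
    Gamma (s + 1 / 2) * Gamma (s + 1) = Gamma (2 * s + 1) * 2 ^ (-(2 * s)) * √π := by
  have h := Gamma_mul_Gamma_add_half (s + 1 / 2)
  rwa [add_assoc, add_halves, mul_add, mul_one_div_cancel two_ne_zero,
    sub_add_cancel_right] at h

theorem two_rpow_neg_two_mul_natCast (m : ℕ) : (2 : ℝ) ^ (-(2 * m : ℝ)) = (4 ^ m)⁻¹ := by
  rw [rpow_neg zero_le_two, rpow_mul zero_le_two, rpow_natCast]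
  norm_num

theorem Real.Gamma_nat_add_half_eq_centralBinom (m : ℕ) :
    Gamma (m + 1 / 2) = √π * m.centralBinom * m ! / 4 ^ m := by
  have h := Gamma_add_half_mul_Gamma_add_one m
  have hfac : ((2 * m) ! : ℝ) = m.centralBinom * m ! * m ! := by
    rw [Nat.centralBinom, two_mul]
    exact_mod_cast (Nat.add_choose_mul_factorial_mul_factorial m m).symm
  rw [two_rpow_neg_two_mul_natCast, Gamma_nat_eq_factorial,
    show 2 * (m : ℝ) + 1 = (2 * m : ℕ) + 1 by push_cast; ring, Gamma_nat_eq_factorial, hfac] at h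
  have : (m ! : ℝ) ≠ 0 := by positivity
  -- `set` keeps `field_simp` from rewriting the argument of `Gamma` on one side only
  set G := Gamma (m + 1 / 2)
  field_simp at h ⊢
  linear_combination h

theorem gbinom_two_mul_self (s : ℝ) :
    gbinom (2 * s) s = 2 ^ (2 * s) * Gamma (s + 1 / 2) / (√π * Gamma (s + 1)) := by
  have h := Gamma_add_half_mul_Gamma_add_one s
  rw [gbinom, two_mul, add_sub_cancel_right, ← two_mul]
  rcases eq_or_ne (Gamma (s + 1)) 0 with h0 | h0
  · simp [h0]
  · have hpow : (2 : ℝ) ^ (-(2 * s)) * 2 ^ (2 * s) = 1 := by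
      rw [← rpow_add two_pos]; simp
    have : √π ≠ 0 := by positivity
    set G := Gamma (s + 1 / 2)
    field_simp
    linear_combination (-(2 : ℝ) ^ (2 * s)) * h - Gamma (2 * s + 1) * √π * hpow

noncomputable def reducedTerm (v : ℝ) (k : ℕ) : ℝ :=
  2 ^ v * (-2) ^ k * (Gamma (k + v / 2 + 1 / 2) / Gamma (k + v + 1))

noncomputable def reducedSum (n : ℕ) (v : ℝ) : ℝ :=
  ∑ k ∈ range (n + 1), (n.choose k : ℝ) * reducedTerm v k

section
variable {v : ℝ}

theorem reducedTerm_add_two_add (hv : -1 < v) (k : ℕ) :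
    reducedTerm v (k + 2) + 2 * reducedTerm v (k + 1) = -((v + 1) / 2) * reducedTerm (v + 2) k := by
  have hk : (0 : ℝ) ≤ k := k.cast_nonneg
  have key := Gamma_add_one_div_Gamma_add_one_sub (x := k + v / 2 + 3 / 2) (y := k + v + 2)
    (by linarith) (by linarith)
  simp only [reducedTerm, rpow_add two_pos v 2, pow_succ]
  push_cast
  -- `linear_combination` treats `Gamma _` as atoms; `ring_nf` first brings their arguments to one form
  ring_nf at key ⊢
  linear_combination 4 * 2 ^ v * (-2) ^ k * key

theorem reducedSum_add_two (hv : -1 < v) (n : ℕ) :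
    reducedSum (n + 2) v = reducedSum n v - (v + 1) / 2 * reducedSum n (v + 2) := by
  rw [reducedSum, sum_range_choose_add_two_mul, reducedSum, reducedSum, mul_sum, ← sum_sub_distrib]
  refine sum_congr rfl fun k _ => ?_
  linear_combination (n.choose k : ℝ) * reducedTerm_add_two_add hv k

theorem reducedSum_zero (hv : -1 < v) : reducedSum 0 v = Gamma (1 / 2) / Gamma (v / 2 + 1) := by
  have hdup := Gamma_add_half_mul_Gamma_add_one (v / 2)
  rw [mul_div_cancel₀ v two_ne_zero] at hdup
  have hpow : (2 : ℝ) ^ v * 2 ^ (-v) = 1 := by rw [← rpow_add two_pos]; simp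
  have h1 : Gamma (v + 1) ≠ 0 := (Gamma_pos_of_pos (by linarith)).ne'
  have h2 : Gamma (v / 2 + 1) ≠ 0 := (Gamma_pos_of_pos (by linarith)).ne'
  simp only [reducedSum, reducedTerm, zero_add, range_one, sum_singleton, Nat.choose_self,
    Nat.cast_one, Nat.cast_zero, pow_zero, one_mul, mul_one, Gamma_one_half_eq]
  rw [← mul_div_assoc, div_eq_div_iff h1 h2]
  linear_combination 2 ^ v * hdup + Gamma (v + 1) * √π * hpow

theorem reducedSum_one (hv : -1 < v) : reducedSum 1 v = 0 := by
  have hx : v / 2 + 1 / 2 ≠ 0 := by intro h; linarith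
  have hy : v + 1 ≠ 0 := by intro h; linarith
  simp only [reducedSum, reducedTerm, sum_range_succ, range_zero, sum_empty, Nat.choose_self,
    Nat.choose_zero_right, Nat.cast_zero, Nat.cast_one, zero_add, one_mul, pow_zero, pow_one]
  rw [show (1 : ℝ) + v / 2 + 1 / 2 = v / 2 + 1 / 2 + 1 by ring,
    show (1 : ℝ) + v + 1 = v + 1 + 1 by ring, Gamma_add_one hx, Gamma_add_one hy]
  rcases eq_or_ne (Gamma (v + 1)) 0 with h0 | h0
  · simp [h0]
  · field_simp
    ring

theorem reducedSum_eq (n : ℕ) (hv : -1 < v) :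
    reducedSum n v = if Even n then Gamma ((n + 1) / 2) / Gamma ((n + v) / 2 + 1) else 0 := by
  induction n using Nat.twoStepInduction generalizing v with
  | zero => simpa using reducedSum_zero hv
  | one => simpa using reducedSum_one hv
  | more n ih _ =>
    rw [reducedSum_add_two hv, ih hv, ih (by linarith : -1 < v + 2)]
    simp only [Nat.even_add, even_two, iff_true]
    split_ifs
    · have hn : (0 : ℝ) ≤ n := n.cast_nonneg
      have key := Gamma_add_one_div_Gamma_add_one_sub (x := (n + 1) / 2) (y := (n + v) / 2 + 1)
        (by positivity) (by intro h; linarith)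
      push_cast
      ring_nf at key ⊢
      linear_combination -key
    · simp

theorem summand_eq_mul_reducedTerm (hv : -1 < v) (n k : ℕ) :
    (-1 : ℝ) ^ k * (n.choose k : ℝ) * (2 : ℝ) ^ (-(k : ℝ)) *
        gbinom (2 * (k : ℝ) + v) ((2 * (k : ℝ) + v) / 2) * (gbinom ((k : ℝ) + v) (v / 2))⁻¹ =
      Gamma (v / 2 + 1) / √π * ((n.choose k : ℝ) * reducedTerm v k) := by
  have hk : (0 : ℝ) ≤ k := k.cast_nonneg
  have hpow : (2 : ℝ) ^ (-(k : ℝ)) * 2 ^ (2 * (k + v / 2)) = 2 ^ v * 2 ^ k := by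
    rw [← rpow_natCast, ← rpow_add two_pos, ← rpow_add two_pos]
    ring_nf
  have h1 : Gamma (v / 2 + 1) ≠ 0 := (Gamma_pos_of_pos (by linarith)).ne'
  have h2 : Gamma (k + v / 2 + 1) ≠ 0 := (Gamma_pos_of_pos (by linarith)).ne'
  have h3 : Gamma (k + v + 1) ≠ 0 := (Gamma_pos_of_pos (by linarith)).ne'
  have h4 : √π ≠ 0 := by positivity
  rw [show 2 * (k : ℝ) + v = 2 * (k + v / 2) by ring, mul_div_cancel_left₀ _ two_ne_zero,
    gbinom_two_mul_self, gbinom, show (k : ℝ) + v - v / 2 + 1 = k + v / 2 + 1 by ring]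
  simp only [reducedTerm, neg_pow (2 : ℝ)]
  set G := Gamma (k + v / 2 + 1 / 2)
  set G' := Gamma (k + v / 2 + 1)
  set G'' := Gamma (v / 2 + 1)
  set P := (2 : ℝ) ^ (2 * (k + v / 2))
  field_simp
  linear_combination (n.choose k : ℝ) * G * hpow

theorem two_rpow_neg_mul_choose_half_mul_inv_gbinom {n : ℕ} (hn : Even n) (hv : -1 < v) :
    (2 : ℝ) ^ (-(n : ℝ)) * (n.choose (n / 2) : ℝ) * (gbinom ((n + v) / 2) (v / 2))⁻¹ =
      Gamma (v / 2 + 1) / √π * (Gamma ((n + 1) / 2) / Gamma ((n + v) / 2 + 1)) := by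
  obtain ⟨m, rfl⟩ := hn.two_dvd
  have hm : (0 : ℝ) ≤ m := m.cast_nonneg
  have h1 : Gamma (v / 2 + 1) ≠ 0 := (Gamma_pos_of_pos (by linarith)).ne'
  have h2 : Gamma (m + v / 2 + 1) ≠ 0 := (Gamma_pos_of_pos (by linarith)).ne'
  have h4 : √π ≠ 0 := by positivity
  rw [gbinom, Nat.mul_div_cancel_left m two_pos]
  push_cast
  rw [two_rpow_neg_two_mul_natCast, show (2 * m + 1 : ℝ) / 2 = m + 1 / 2 by ring,
    show (2 * m + v : ℝ) / 2 = m + v / 2 by ring, show (m : ℝ) + v / 2 - v / 2 + 1 = m + 1 by ring,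
    Gamma_nat_eq_factorial, Gamma_nat_add_half_eq_centralBinom, Nat.centralBinom]
  field_simp

end

theorem knuth_old_sum_gen_v (n : ℕ) (v : ℝ) (hv : v > -1) :
    ∑ k ∈ Finset.range (n + 1),
      (-1 : ℝ) ^ k * (n.choose k : ℝ) * (2 : ℝ) ^ (-(k : ℝ)) *
        gbinom (2 * (k : ℝ) + v) ((2 * (k : ℝ) + v) / 2) * (gbinom ((k : ℝ) + v) (v / 2))⁻¹
    = if Even n then
        (2 : ℝ) ^ (-(n : ℝ)) * (n.choose (n / 2) : ℝ) * (gbinom (((n : ℝ) + v) / 2) (v / 2))⁻¹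
      else 0 := by
  rw [sum_congr rfl fun k _ => summand_eq_mul_reducedTerm hv n k, ← mul_sum, ← reducedSum,
    reducedSum_eq n hv]
  split_ifs with hn
  · rw [two_rpow_neg_mul_choose_half_mul_inv_gbinom hn hv]
  · rw [mul_zero]
end

section
/- Let n be a nonnegative integer and let v > −1 be a real number. Then ∑_{k=0}^{⌊n/2⌋} C(n, 2k) · 2^{−2k} · C(2k, k) · B((2k+v)/2, k)^{−1} = 2^{−n} · B(2n+v, (2n+v)/2) · B(n+v, v/2)^{−1}. -/
open Real

/-!
Put `m = ⌊n/2⌋`, `a = n - m - 1/2` and `c = v/2 + 1`, and write `(x)ₖ` for the rising and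
`x^{(k)}` for the falling factorial. Since `gbinom (c - 1 + k) k = (c)ₖ / k!` and
`n^{(2k)} = 4^k (n/2)^{(k)} ((n-1)/2)^{(k)}`, where `{n/2, (n-1)/2} = {m, a}`, the `k`-th summand
is `C(m, k) a^{(k)} / (c)ₖ`. The sum is then a terminating Chu–Vandermonde sum, equal to
`(c + a)ₘ / (c)ₘ = Γ(c) Γ(n + c - 1/2) / (Γ(c + (n-1)/2) Γ(c + n/2))`, and Legendre's duplication
formula brings the right-hand side to the same ratio of Gamma values.
-/

open Polynomial Finset Nat

namespace Polynomial

theorem descPochhammer_smeval_eq_eval {R : Type*} [Ring R] (r : R) (n : ℕ) :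
    (descPochhammer ℤ n).smeval r = (descPochhammer R n).eval r := by
  rw [descPochhammer_smeval_eq_ascPochhammer, ascPochhammer_smeval_eq_eval,
    descPochhammer_eval_eq_ascPochhammer]

theorem descPochhammer_eval_add {R : Type*} [CommRing R] (r s : R) (k : ℕ) :
    (descPochhammer R k).eval (r + s) = ∑ ij ∈ antidiagonal k,
      k.choose ij.1 * ((descPochhammer R ij.1).eval r * (descPochhammer R ij.2).eval s) := by
  simpa only [descPochhammer_smeval_eq_eval] using
    Ring.descPochhammer_smeval_add k (Commute.all r s)

theorem ascPochhammer_eval_mul_eval_add {R : Type*} [CommSemiring R] (r : R) (k j : ℕ) :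
    (ascPochhammer R k).eval r * (ascPochhammer R j).eval (r + k) =
      (ascPochhammer R (k + j)).eval r := by
  simpa using congrArg (eval r) (ascPochhammer_mul R k j)

theorem descPochhammer_eval_two_mul {K : Type*} [Field K] [NeZero (2 : K)] (x : K) (k : ℕ) :
    (descPochhammer K (2 * k)).eval x =
      4 ^ k * (descPochhammer K k).eval (x / 2) * (descPochhammer K k).eval ((x - 1) / 2) := by
  induction k with
  | zero => simp
  | succ k ih =>
    have h2 : (2 : K) ≠ 0 := two_ne_zero
    rw [Nat.mul_succ, descPochhammer_succ_eval, descPochhammer_succ_eval, ih,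
      descPochhammer_succ_eval, descPochhammer_succ_eval]
    field_simp
    push_cast
    ring

theorem sum_choose_mul_descPochhammer_div_ascPochhammer {K : Type*} [Field K] (m : ℕ) (a c : K)
    (hc : (ascPochhammer K m).eval c ≠ 0) :
    ∑ k ∈ range (m + 1),
        m.choose k * (descPochhammer K k).eval a / (ascPochhammer K k).eval c =
      (ascPochhammer K m).eval (c + a) / (ascPochhammer K m).eval c := by
  have hvdm := descPochhammer_eval_add a (c + m - 1) m
  rw [descPochhammer_eval_eq_ascPochhammer, Nat.sum_antidiagonal_eq_sum_range_succ_mk] at hvdm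
  rw [eq_div_iff hc, sum_mul, show c + a = a + (c + m - 1) - m + 1 by ring, hvdm]
  refine sum_congr rfl fun k hk => ?_
  have hkm : k ≤ m := Nat.lt_succ_iff.mp (mem_range.mp hk)
  have hsplit := ascPochhammer_eval_mul_eval_add c k (m - k)
  rw [Nat.add_sub_cancel' hkm] at hsplit
  have hck : (ascPochhammer K k).eval c ≠ 0 := left_ne_zero_of_mul (hsplit ▸ hc)
  rw [descPochhammer_eval_eq_ascPochhammer (r := c + m - 1), ← hsplit, Nat.cast_sub hkm,
    show c + m - 1 - (m - k : K) + 1 = c + k by ring]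
  field_simp

end Polynomial

namespace Real

theorem Gamma_add_nat_eq_ascPochhammer_eval_mul {x : ℝ} (hx : ∀ j : ℕ, x ≠ -j) (n : ℕ) :
    Gamma (x + n) = (ascPochhammer ℝ n).eval x * Gamma x := by
  induction n with
  | zero => simp
  | succ n ih =>
    have hxn : x + n ≠ 0 := fun h => hx n (eq_neg_of_add_eq_zero_left h)
    rw [Nat.cast_succ, ← add_assoc, Gamma_add_one hxn, ih, ascPochhammer_succ_eval]
    ring

theorem ascPochhammer_eval_div_ascPochhammer_eval {x y : ℝ} (hx : 0 < x) (hy : 0 < y) (m : ℕ) :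
    (ascPochhammer ℝ m).eval x / (ascPochhammer ℝ m).eval y =
      Gamma (x + m) * Gamma y / (Gamma (y + m) * Gamma x) := by
  have hpole {z : ℝ} (hz : 0 < z) (j : ℕ) : z ≠ -j := by linarith [j.cast_nonneg (α := ℝ)]
  have := (Gamma_pos_of_pos hx).ne'
  have := (Gamma_pos_of_pos hy).ne'
  rw [Gamma_add_nat_eq_ascPochhammer_eval_mul (hpole hx),
    Gamma_add_nat_eq_ascPochhammer_eval_mul (hpole hy)]
  field_simp

end Real

theorem gbinom_add_nat_self {x : ℝ} (hx : ∀ j : ℕ, x + 1 ≠ -j) (k : ℕ) :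
    gbinom (x + k) k = (ascPochhammer ℝ k).eval (x + 1) / k ! := by
  have hΓ : Gamma (x + 1) ≠ 0 := Gamma_ne_zero hx
  rw [gbinom, add_sub_cancel_right, add_right_comm, Gamma_add_nat_eq_ascPochhammer_eval_mul hx,
    Gamma_nat_eq_factorial]
  field_simp

theorem two_rpow_neg_mul_gbinom_mul_inv_gbinom {x v : ℝ} (hx : 0 ≤ x) (hv : -1 < v) :
    2 ^ (-x) * gbinom (2 * x + v) ((2 * x + v) / 2) * (gbinom (x + v) (v / 2))⁻¹ =
      Gamma (v / 2 + 1) * Gamma (x + v / 2 + 1 / 2) /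
        (Gamma (x / 2 + v / 2 + 1 / 2) * Gamma (x / 2 + v / 2 + 1)) := by
  have duplication (s : ℝ) :
      Gamma (2 * s) = Gamma s * Gamma (s + 1 / 2) / (2 ^ (1 - 2 * s) * √π) := by
    rw [Gamma_mul_Gamma_add_half, mul_assoc, mul_div_cancel_right₀ _ (by positivity)]
  have hpow : (2 : ℝ) ^ (-x) * 2 ^ (1 - 2 * (x / 2 + v / 2 + 1 / 2)) =
      2 ^ (1 - 2 * (x + v / 2 + 1 / 2)) := by
    rw [← rpow_add two_pos]
    ring_nf
  simp only [gbinom]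
  rw [show 2 * x + v + 1 = 2 * (x + v / 2 + 1 / 2) by ring, duplication,
    show x + v + 1 = 2 * (x / 2 + v / 2 + 1 / 2) by ring, duplication, ← hpow,
    show (2 * x + v) / 2 + 1 = x + v / 2 + 1 / 2 + 1 / 2 by ring,
    show 2 * x + v - (2 * x + v) / 2 + 1 = x + v / 2 + 1 / 2 + 1 / 2 by ring,
    show x + v - v / 2 + 1 = x + v / 2 + 1 / 2 + 1 / 2 by ring,
    show x / 2 + v / 2 + 1 = x / 2 + v / 2 + 1 / 2 + 1 / 2 by ring]
  have h1 : Gamma (x + v / 2 + 1 / 2) ≠ 0 := (Gamma_pos_of_pos (by linarith)).ne'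
  have h2 : Gamma (x + v / 2 + 1 / 2 + 1 / 2) ≠ 0 := (Gamma_pos_of_pos (by linarith)).ne'
  have h3 : Gamma (x / 2 + v / 2 + 1 / 2) ≠ 0 := (Gamma_pos_of_pos (by linarith)).ne'
  have h4 : Gamma (x / 2 + v / 2 + 1 / 2 + 1 / 2) ≠ 0 := (Gamma_pos_of_pos (by linarith)).ne'
  -- otherwise `field_simp` rewrites the arguments of `Gamma` and no longer sees these facts
  generalize Gamma (x + v / 2 + 1 / 2) = A at *
  generalize Gamma (x + v / 2 + 1 / 2 + 1 / 2) = B at *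
  generalize Gamma (x / 2 + v / 2 + 1 / 2) = C at *
  generalize Gamma (x / 2 + v / 2 + 1 / 2 + 1 / 2) = D at *
  field_simp

theorem apply_div_two_mul_apply_sub_one_div_two {M : Type*} [CommMagma M] (f : ℝ → M) (n : ℕ) :
    f (n / 2) * f ((n - 1) / 2) = f ↑(n / 2) * f (n - ↑(n / 2) - 1 / 2) := by
  obtain ⟨m, rfl | rfl⟩ := Nat.even_or_odd' n
  · rw [Nat.mul_div_cancel_left m two_pos]
    push_cast
    congr 2 <;> ring
  · rw [show (2 * m + 1) / 2 = m by omega, mul_comm]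
    push_cast
    congr 2 <;> ring

theorem cast_choose_two_mul_mul_choose (n k : ℕ) :
    (n.choose (2 * k) * (2 * k).choose k : ℝ) =
      4 ^ k * (n / 2).choose k * (descPochhammer ℝ k).eval ((n : ℝ) - ↑(n / 2) - 1 / 2) / k ! := by
  rw [cast_choose_eq_descPochhammer_div, cast_choose_eq_descPochhammer_div (K := ℝ) (n / 2),
    Nat.cast_choose ℝ (Nat.le_mul_of_pos_left k two_pos), show 2 * k - k = k by omega,
    descPochhammer_eval_two_mul, mul_assoc _ (eval _ _),
    apply_div_two_mul_apply_sub_one_div_two (fun y => (descPochhammer ℝ k).eval y)]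
  field_simp

theorem choose_mul_two_rpow_mul_choose_mul_inv_gbinom (n k : ℕ) {v : ℝ} (hv : -1 < v) :
    (n.choose (2 * k) : ℝ) * (2 : ℝ) ^ (-2 * (k : ℝ)) * ((2 * k).choose k : ℝ) *
        (gbinom ((2 * (k : ℝ) + v) / 2) (k : ℝ))⁻¹ =
      (n / 2).choose k * (descPochhammer ℝ k).eval ((n : ℝ) - ↑(n / 2) - 1 / 2) /
        (ascPochhammer ℝ k).eval (v / 2 + 1) := by
  have hc : 0 < v / 2 + 1 := by linarith
  have hpole (j : ℕ) : v / 2 + 1 ≠ -j := by linarith [j.cast_nonneg (α := ℝ)]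
  have h4 : (2 : ℝ) ^ (-2 * (k : ℝ)) = (4 ^ k)⁻¹ := by
    rw [neg_mul, rpow_neg two_pos.le, rpow_mul two_pos.le]
    norm_num
  rw [show (2 * (k : ℝ) + v) / 2 = v / 2 + k by ring, gbinom_add_nat_self hpole, h4,
    mul_right_comm _ _ ((2 * k).choose k : ℝ), cast_choose_two_mul_mul_choose]
  have := (ascPochhammer_pos k _ hc).ne'
  generalize (ascPochhammer ℝ k).eval (v / 2 + 1) = A at *
  field_simp

theorem ascPochhammer_eval_div_eq_Gamma (n : ℕ) {v : ℝ} (hv : -1 < v) :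
    (ascPochhammer ℝ (n / 2)).eval (v / 2 + 1 + ((n : ℝ) - ↑(n / 2) - 1 / 2)) /
        (ascPochhammer ℝ (n / 2)).eval (v / 2 + 1) =
      Gamma (v / 2 + 1) * Gamma (n + v / 2 + 1 / 2) /
        (Gamma (n / 2 + v / 2 + 1 / 2) * Gamma (n / 2 + v / 2 + 1)) := by
  have hca : 0 < v / 2 + 1 + ((n : ℝ) - ↑(n / 2) - 1 / 2) := by
    have : ((n / 2 : ℕ) : ℝ) ≤ n / 2 := Nat.cast_div_le
    linarith
  rw [ascPochhammer_eval_div_ascPochhammer_eval hca (by linarith),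
    ← apply_div_two_mul_apply_sub_one_div_two (fun y => Gamma (v / 2 + 1 + y)),
    mul_comm (Gamma (v / 2 + 1)), mul_comm (Gamma ((n : ℝ) / 2 + v / 2 + 1 / 2))]
  congr 3 <;> ring

theorem even_index_sum_identity (n : ℕ) (v : ℝ) (hv : v > -1) :
    ∑ k ∈ Finset.range (n / 2 + 1),
      (n.choose (2 * k) : ℝ) * (2 : ℝ) ^ (-2 * (k : ℝ)) * ((2 * k).choose k : ℝ) *
        (gbinom ((2 * (k : ℝ) + v) / 2) (k : ℝ))⁻¹
    = (2 : ℝ) ^ (-(n : ℝ)) * gbinom (2 * (n : ℝ) + v) ((2 * (n : ℝ) + v) / 2) *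
        (gbinom ((n : ℝ) + v) (v / 2))⁻¹ := by
  rw [sum_congr rfl fun k _ => choose_mul_two_rpow_mul_choose_mul_inv_gbinom n k hv,
    sum_choose_mul_descPochhammer_div_ascPochhammer _ _ _
      (ascPochhammer_pos _ _ (by linarith)).ne',
    two_rpow_neg_mul_gbinom_mul_inv_gbinom n.cast_nonneg hv, ascPochhammer_eval_div_eq_Gamma n hv]
end

section
/- Let n be a nonnegative integer and let v > −1 be a real number. Then ∑_{k=0}^{n} C(n,k) · B(2k+v, (2k+v)/2) · B(2n−2k+v, (2n−2k+v)/2) · B(n+v, (2k+v)/2)^{−1} = 2^{2n} · B(v, v/2). -/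
/-!
Legendre's duplication formula gives `B(s, s/2) = 2^s Γ((s+1)/2) / (√π Γ(s/2+1))`. With
`a = (v+1)/2`, the `Γ(k + v/2 + 1)` factors then cancel against `B(n+v, k+v/2)⁻¹`, and the
`k`-th summand becomes `2^(2n+2v) / (π Γ(n+v+1)) · C(n,k) Γ(a+k) Γ(a+n-k)`. Writing
`Γ(a+k) = Γ(a) (a)_k`, the Chu–Vandermonde identity for rising factorials sums these to
`Γ(a)² (v+1)_n`, and `Γ(v+1) (v+1)_n = Γ(n+v+1)` together with a second use of the duplication
formula turns the result into `4^n B(v, v/2)`.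
-/

open Real

open Polynomial Finset

namespace Polynomial

theorem descPochhammer_smeval_int_eq_eval {R : Type*} [CommRing R] (r : R) (n : ℕ) :
    (descPochhammer ℤ n).smeval r = (descPochhammer R n).eval r := by
  rw [descPochhammer_smeval_eq_ascPochhammer, ascPochhammer_smeval_eq_eval,
    descPochhammer_eval_eq_ascPochhammer]

theorem ascPochhammer_eval_add {R : Type*} [CommRing R] (a b : R) (n : ℕ) :
    (ascPochhammer R n).eval (a + b) = ∑ ij ∈ antidiagonal n,
      n.choose ij.1 * ((ascPochhammer R ij.1).eval a * (ascPochhammer R ij.2).eval b) := by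
  have to_desc (r : R) (k : ℕ) :
      (ascPochhammer R k).eval r = (-1) ^ k * (descPochhammer ℤ k).smeval (-r) := by
    simpa [descPochhammer_smeval_int_eq_eval] using
      ascPochhammer_eval_neg_eq_descPochhammer R (-r) k
  simp_rw [to_desc]
  rw [neg_add, Ring.descPochhammer_smeval_add _ (Commute.all _ _), mul_sum]
  refine sum_congr rfl fun ij hij => ?_
  rw [← mem_antidiagonal.mp hij, pow_add]
  ring

end Polynomial

namespace Real

theorem Gamma_add_nat_eq_mul_ascPochhammer {a : ℝ} (ha : ∀ m : ℕ, a ≠ -m) (n : ℕ) :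
    Gamma (a + n) = Gamma a * (ascPochhammer ℝ n).eval a := by
  induction n with
  | zero => simp
  | succ n ih =>
    have hn : a + n ≠ 0 := fun h => ha n (eq_neg_of_add_eq_zero_left h)
    rw [Nat.cast_succ, ← add_assoc, Gamma_add_one hn, ih, ascPochhammer_succ_right, eval_mul,
      eval_add, eval_X, eval_natCast]
    ring

theorem sum_choose_mul_Gamma_add_mul_Gamma_add {a b : ℝ} (ha : ∀ m : ℕ, a ≠ -m)
    (hb : ∀ m : ℕ, b ≠ -m) (n : ℕ) :
    ∑ k ∈ range (n + 1), n.choose k * Gamma (a + k) * Gamma (b + ↑(n - k)) =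
      Gamma a * Gamma b * (ascPochhammer ℝ n).eval (a + b) := by
  rw [ascPochhammer_eval_add, Nat.sum_antidiagonal_eq_sum_range_succ_mk, mul_sum]
  refine sum_congr rfl fun k _ => ?_
  rw [Gamma_add_nat_eq_mul_ascPochhammer ha, Gamma_add_nat_eq_mul_ascPochhammer hb]
  ring

theorem Gamma_add_one_mul_sqrt_pi (s : ℝ) :
    Gamma (s + 1) * √π = 2 ^ s * Gamma ((s + 1) / 2) * Gamma (s / 2 + 1) := by
  have h := Gamma_mul_Gamma_add_half ((s + 1) / 2)
  rw [show (s + 1) / 2 + 1 / 2 = s / 2 + 1 by ring, show 2 * ((s + 1) / 2) = s + 1 by ring,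
    show 1 - (s + 1) = -s by ring, rpow_neg zero_le_two] at h
  rw [mul_assoc, h]
  field_simp

end Real

theorem gbinom_self_half (s : ℝ) :
    gbinom s (s / 2) = 2 ^ s * Gamma ((s + 1) / 2) / (√π * Gamma (s / 2 + 1)) := by
  rw [gbinom, show s - s / 2 + 1 = s / 2 + 1 by ring]
  rcases eq_or_ne (Gamma (s / 2 + 1)) 0 with h | h
  -- both sides are junk `x / 0 = 0`
  · simp [h]
  · rw [div_eq_div_iff (mul_ne_zero h h) (mul_ne_zero (by positivity) h)]
    linear_combination Gamma (s / 2 + 1) * Gamma_add_one_mul_sqrt_pi s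

theorem gbinom_self_half_eq_sq {s : ℝ} (hs : -1 < s) :
    gbinom s (s / 2) = (2 ^ s * Gamma ((s + 1) / 2)) ^ 2 / (π * Gamma (s + 1)) := by
  have hΓ : 0 < Gamma (s + 1) := Gamma_pos_of_pos (by linarith)
  have hq : 0 < √π := by positivity
  have dup := Gamma_add_one_mul_sqrt_pi s
  have hπ : π = √π ^ 2 := (sq_sqrt pi_pos.le).symm
  rw [gbinom_self_half]
  set q := √π
  rw [hπ]
  set G := Gamma (s / 2 + 1)
  have hG : 0 < G := Gamma_pos_of_pos (by linarith)
  field_simp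
  linear_combination Gamma ((s + 1) / 2) * dup

theorem gbinom_convolution_term {n k : ℕ} (hk : k ≤ n) {v : ℝ} (hv : -1 < v) :
    gbinom (2 * (k : ℝ) + v) ((2 * (k : ℝ) + v) / 2) *
      gbinom (2 * (n : ℝ) - 2 * (k : ℝ) + v) ((2 * (n : ℝ) - 2 * (k : ℝ) + v) / 2) *
      (gbinom ((n : ℝ) + v) ((2 * (k : ℝ) + v) / 2))⁻¹ =
    2 ^ (2 * (n : ℝ) + 2 * v) / (π * Gamma (n + v + 1)) *
      (Gamma ((v + 1) / 2 + k) * Gamma ((v + 1) / 2 + ↑(n - k))) := by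
  have hnk : ((n - k : ℕ) : ℝ) = n - k := Nat.cast_sub hk
  have hk0 : (0 : ℝ) ≤ k := k.cast_nonneg
  have hnk0 : (k : ℝ) ≤ n := Nat.cast_le.mpr hk
  rw [gbinom_self_half, gbinom_self_half, gbinom, hnk,
    show (2 * (k : ℝ) + v + 1) / 2 = (v + 1) / 2 + k by ring,
    show (2 * (n : ℝ) - 2 * k + v + 1) / 2 = (v + 1) / 2 + (n - k) by ring,
    show (2 * (n : ℝ) - 2 * k + v) / 2 + 1 = n + v - (2 * k + v) / 2 + 1 by ring]
  have hG₁ : 0 < Gamma ((2 * (k : ℝ) + v) / 2 + 1) := Gamma_pos_of_pos (by linarith)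
  have hG₂ : 0 < Gamma (n + v - (2 * (k : ℝ) + v) / 2 + 1) := Gamma_pos_of_pos (by linarith)
  have hG : 0 < Gamma (n + v + 1) := Gamma_pos_of_pos (by linarith)
  have hpow : (2 : ℝ) ^ (2 * (k : ℝ) + v) * 2 ^ (2 * (n : ℝ) - 2 * k + v) =
      2 ^ (2 * (n : ℝ) + 2 * v) := by
    rw [← rpow_add two_pos]; ring_nf
  have hπ : π = √π ^ 2 := (sq_sqrt pi_pos.le).symm
  set q := √π
  set G₁ := Gamma ((2 * (k : ℝ) + v) / 2 + 1)
  set G₂ := Gamma (n + v - (2 * (k : ℝ) + v) / 2 + 1)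
  rw [hπ, ← hpow]
  field_simp

theorem convolution_generalization (n : ℕ) (v : ℝ) (hv : v > -1) :
    ∑ k ∈ Finset.range (n + 1),
      (n.choose k : ℝ) * gbinom (2 * (k : ℝ) + v) ((2 * (k : ℝ) + v) / 2) *
        gbinom (2 * (n : ℝ) - 2 * (k : ℝ) + v) ((2 * (n : ℝ) - 2 * (k : ℝ) + v) / 2) *
        (gbinom ((n : ℝ) + v) ((2 * (k : ℝ) + v) / 2))⁻¹
    = (2 : ℝ) ^ (2 * n) * gbinom v (v / 2) := by
  have not_neg_nat {x : ℝ} (hx : 0 < x) (m : ℕ) : x ≠ -m := by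
    have := m.cast_nonneg (α := ℝ); linarith
  have ha : 0 < (v + 1) / 2 := by linarith
  calc _ = 2 ^ (2 * (n : ℝ) + 2 * v) / (π * Gamma (n + v + 1)) * ∑ k ∈ range (n + 1),
        n.choose k * Gamma ((v + 1) / 2 + k) * Gamma ((v + 1) / 2 + ↑(n - k)) := by
        rw [mul_sum]
        refine sum_congr rfl fun k hk => ?_
        rw [mul_assoc, mul_assoc, ← mul_assoc (gbinom _ _),
          gbinom_convolution_term (Nat.lt_succ_iff.mp (mem_range.mp hk)) hv]
        ring
    _ = 2 ^ (2 * (n : ℝ) + 2 * v) / (π * Gamma (n + v + 1)) *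
        (Gamma ((v + 1) / 2) ^ 2 * (ascPochhammer ℝ n).eval (v + 1)) := by
        rw [sum_choose_mul_Gamma_add_mul_Gamma_add (not_neg_nat ha) (not_neg_nat ha), add_halves]
        ring
    _ = _ := by
        have hG : Gamma (n + v + 1) = Gamma (v + 1) * (ascPochhammer ℝ n).eval (v + 1) := by
          rw [← Gamma_add_nat_eq_mul_ascPochhammer (not_neg_nat (by linarith))]
          congr 1; ring
        have hP : 0 < (ascPochhammer ℝ n).eval (v + 1) := ascPochhammer_pos _ _ (by linarith)
        have hΓ : 0 < Gamma (v + 1) := Gamma_pos_of_pos (by linarith)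
        have hpow : (2 : ℝ) ^ (2 * (n : ℝ) + 2 * v) = 2 ^ (2 * n) * (2 ^ v) ^ 2 := by
          rw [rpow_add two_pos, ← rpow_natCast, ← rpow_mul_natCast two_pos.le]
          push_cast; ring_nf
        rw [hG, hpow, gbinom_self_half_eq_sq hv]
        field_simp
end

section
/- Let n be a nonnegative integer, let u > −1 and v > −1 be real numbers, and let x be a real number. Then ∑_{k=0}^{n} (−1)^{n−k} · C(n,k) · B(k+u+v+1, u+1)^{−1} · (1−x)^{n−k} = ((u+1)/(v+1)) · ∑_{k=0}^{n} (−1)^k · C(n,k) · B(k+u+v+1, v+1)^{−1} · x^{n−k}. -/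
/-!
In terms of Euler's Beta function `beta a b = Γ(a) Γ(b) / Γ(a+b)`,
`B(k+u+v+1, u+1)⁻¹ = (u+1) beta (v+1+k) (u+1)`, so the left side is `(u+1) [(E + (x-1))ⁿ f](0)`
for `f k = beta (v+1+k) (u+1)`, where `E` is the shift of sequences. Writing `E = 1 + Δ` this is
`(u+1) [(Δ + x)ⁿ f](0)`, and `beta (a+1) b - beta a b = -beta a (b+1)` gives
`Δʲ f 0 = (-1)ʲ beta (v+1) (u+1+j) = (-1)ʲ (v+1)⁻¹ B(j+u+v+1, v+1)⁻¹`.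
-/

open Real

open Finset ProbabilityTheory fwdDiff

theorem ProbabilityTheory.beta_comm (a b : ℝ) : beta a b = beta b a := by
  rw [beta, beta, mul_comm, add_comm]

theorem ProbabilityTheory.beta_add_one_left_add_beta_add_one_right {a b : ℝ} (ha : a ≠ 0)
    (hb : b ≠ 0) (hab : a + b ≠ 0) : beta (a + 1) b + beta a (b + 1) = beta a b := by
  simp only [beta, add_right_comm a 1 b, ← add_assoc, Gamma_add_one ha, Gamma_add_one hb,
    Gamma_add_one hab, ← add_div]
  rw [← mul_div_mul_left (Gamma a * Gamma b) _ hab]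
  ring

theorem inv_gbinom_eq_mul_beta {a b : ℝ} (hb : b ≠ 0) :
    (gbinom a b)⁻¹ = b * beta b (a - b + 1) := by
  rw [gbinom, inv_div, beta, Gamma_add_one hb, show b + (a - b + 1) = a + 1 by ring, mul_assoc,
    mul_div_assoc]

theorem fwdDiff_iter_beta_add_left {a b : ℝ} (ha : 0 < a) (hb : 0 < b) (j : ℕ) :
    (Δ_[1])^[j] (fun k : ℕ ↦ beta (a + k) b) = fun k : ℕ ↦ (-1) ^ j * beta (a + k) (b + j) := by
  induction j with
  | zero => simp
  | succ j ih =>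
    ext k
    have hak : 0 < a + k := by positivity
    have hbj : 0 < b + j := by positivity
    rw [Function.iterate_succ_apply', ih, fwdDiff, ← mul_sub, Nat.cast_add_one, Nat.cast_add_one,
      ← add_assoc, ← add_assoc, ← beta_add_one_left_add_beta_add_one_right hak.ne' hbj.ne'
        (by positivity)]
    ring

theorem sum_choose_mul_pow_eq_sum_fwdDiff_iter {R : Type*} [CommRing R] (f : ℕ → R) (y : R)
    (n : ℕ) :
    ∑ k ∈ range (n + 1), (n.choose k : R) * f k * y ^ (n - k)
      = ∑ k ∈ range (n + 1), (n.choose k : R) * (Δ_[1])^[k] f 0 * (y + 1) ^ (n - k) := by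
  let S : Module.End R (ℕ → R) := LinearMap.funLeft R R Nat.succ
  have hS : ∀ k g, (S ^ k) g 0 = g k := by
    intro k
    induction k with
    | zero => simp
    | succ k ih => intro g; rw [pow_succ, Module.End.mul_apply, ih]; rfl
  have hΔ : ∀ k g, ((S - 1) ^ k) g = (Δ_[1])^[k] g := by
    intro k g
    rw [Module.End.pow_apply]
    rfl
  have key : (S + algebraMap R _ y) ^ n = ((S - 1) + algebraMap R _ (y + 1)) ^ n := by
    rw [map_add, map_one]; abel_nf
  have hterm : ∀ (T : Module.End R (ℕ → R)) (c : R) (m N : ℕ),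
      (T * algebraMap R _ c ^ m * N) f = ((N : R) * c ^ m) • T f := by
    intro T c m N
    rw [← map_pow, ← map_natCast (algebraMap R _), mul_assoc, ← map_mul, Module.End.mul_apply,
      Module.algebraMap_end_apply, map_smul, mul_comm]
  have hkey := congr_fun (LinearMap.congr_fun key f) 0
  simp only [(Algebra.commute_algebraMap_right _ _).add_pow, LinearMap.sum_apply, hterm,
    Finset.sum_apply, Pi.smul_apply, smul_eq_mul, hS, hΔ] at hkey
  simpa only [mul_right_comm] using hkey

theorem polynomial_identity_binom_recip (n : ℕ) (u v : ℝ) (hu : u > -1) (hv : v > -1)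
    (x : ℝ) :
    ∑ k ∈ Finset.range (n + 1),
      (-1 : ℝ) ^ (n - k) * (n.choose k : ℝ) *
        (gbinom ((k : ℝ) + u + v + 1) (u + 1))⁻¹ * (1 - x) ^ (n - k)
    = (u + 1) / (v + 1) *
        ∑ k ∈ Finset.range (n + 1),
          (-1 : ℝ) ^ k * (n.choose k : ℝ) *
            (gbinom ((k : ℝ) + u + v + 1) (v + 1))⁻¹ * x ^ (n - k) := by
  have hu1 : 0 < u + 1 := by linarith
  have hv1 : 0 < v + 1 := by linarith
  let f : ℕ → ℝ := fun k ↦ beta (v + 1 + k) (u + 1)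
  calc _ = (u + 1) * ∑ k ∈ range (n + 1), (n.choose k : ℝ) * f k * (x - 1) ^ (n - k) := by
        rw [mul_sum]
        refine sum_congr rfl fun k _ ↦ ?_
        rw [inv_gbinom_eq_mul_beta hu1.ne', beta_comm, show (k : ℝ) + u + v + 1 - (u + 1) + 1 =
          v + 1 + k by ring, show x - 1 = -1 * (1 - x) by ring, mul_pow]
        ring
    _ = (u + 1) * ∑ k ∈ range (n + 1), (n.choose k : ℝ) * (Δ_[1])^[k] f 0 * x ^ (n - k) := by
        rw [sum_choose_mul_pow_eq_sum_fwdDiff_iter, sub_add_cancel]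
    _ = _ := by
        rw [mul_sum, mul_sum]
        refine sum_congr rfl fun k _ ↦ ?_
        simp only [f, fwdDiff_iter_beta_add_left hv1 hu1, Nat.cast_zero, add_zero]
        rw [inv_gbinom_eq_mul_beta hv1.ne']
        rw [show (k : ℝ) + u + v + 1 - (v + 1) + 1 = u + 1 + k by ring]
        field_simp
end

section
/- Let n be a nonnegative integer, let v > −1 be a real number, and let x be a real number. Then ∑_{k=0}^{n} C(n,k) · 2^{−k} · B(2k+v, (2k+v)/2) · B(k+v, v/2)^{−1} · (1−x)^k · x^{n−k} = ∑_{k=0}^{⌊n/2⌋} C(n, 2k) · 2^{−2k} · C(2k, k) · B((2k+v)/2, k)^{−1} · (1−x)^{2k}. -/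
open Real

/-!
Let `μᵢ` be the moments of the probability measure with density proportional to
`(1 - t²)^((v-1)/2)` on `[-1, 1]`, and `L` the corresponding linear functional on `ℝ[X]`.
Applying `L` to the two binomial expansions of `((1 - x)(X + 1) + x)ⁿ = ((1 - x) X + 1)ⁿ` gives
`∑ C(n,k) L((X+1)ᵏ) (1-x)ᵏ xⁿ⁻ᵏ = ∑ C(n,i) μᵢ (1-x)ⁱ`. The odd moments vanish, and
`L((X+1)ᵏ)` and `μ_{2k}` satisfy the same first-order recurrences as the Gamma-function
coefficients of the two sides; for `L((X+1)ᵏ)` the recurrence comes from the integration by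
parts identity `L(p' (1 - X²)) = (v + 1) L(X p)`.
-/

open Polynomial Finset

theorem sum_range_succ_eq_sum_even_of_odd_eq_zero {M : Type*} [AddCommMonoid M] (g : ℕ → M)
    (hg : ∀ j, g (2 * j + 1) = 0) (n : ℕ) :
    ∑ i ∈ range (n + 1), g i = ∑ j ∈ range (n / 2 + 1), g (2 * j) := by
  have hodd (m : ℕ) : ∑ i ∈ range (2 * m + 1), g i = ∑ j ∈ range (m + 1), g (2 * j) := by
    induction m with
    | zero => simp
    | succ m ih =>
      rw [sum_range_succ _ (m + 1), ← ih, show 2 * (m + 1) + 1 = 2 * m + 1 + 1 + 1 by ring,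
        sum_range_succ, sum_range_succ, hg, add_zero]
      rfl
  obtain ⟨m, rfl | rfl⟩ := Nat.even_or_odd' n
  · rw [hodd, Nat.mul_div_cancel_left m two_pos]
  · rw [sum_range_succ, hg, add_zero, hodd, show (2 * m + 1) / 2 = m by omega]

theorem LinearMap.map_C_mul {R M : Type*} [CommSemiring R] [AddCommMonoid M] [Module R M]
    (L : R[X] →ₗ[R] M) (a : R) (p : R[X]) : L (C a * p) = a • L p := by
  rw [C_mul', map_smul]

theorem sum_choose_mul_map_X_add_one_pow {R : Type*} [CommRing R] (L : R[X] →ₗ[R] R) (n : ℕ)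
    (x y : R) :
    ∑ k ∈ range (n + 1), (n.choose k : R) * L ((X + 1) ^ k) * y ^ k * x ^ (n - k)
      = ∑ i ∈ range (n + 1), (n.choose i : R) * L (X ^ i) * y ^ i * (x + y) ^ (n - i) := by
  have hexpand (a b : R) (q : R[X]) : L ((C a * q + C b) ^ n)
      = ∑ k ∈ range (n + 1), (n.choose k : R) * L (q ^ k) * a ^ k * b ^ (n - k) := by
    rw [add_pow, map_sum]
    refine sum_congr rfl fun k _ => ?_
    rw [show (C a * q) ^ k * C b ^ (n - k) * (n.choose k : R[X])
        = C ((n.choose k : R) * a ^ k * b ^ (n - k)) * q ^ k by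
          simp only [map_mul, map_pow, map_natCast]; ring,
      L.map_C_mul, smul_eq_mul]
    ring
  rw [← hexpand y x, ← hexpand y (x + y)]
  congr 2
  simp only [map_add]
  ring

theorem gbinom_pos {a b : ℝ} (ha : 0 < a + 1) (hb : 0 < b + 1) (hab : 0 < a - b + 1) :
    0 < gbinom a b := by
  have := Gamma_pos_of_pos ha
  have := Gamma_pos_of_pos hb
  have := Gamma_pos_of_pos hab
  unfold gbinom
  positivity

theorem gbinom_zero_right {a : ℝ} (ha : 0 < a + 1) : gbinom a 0 = 1 := by
  simp [gbinom, (Gamma_pos_of_pos ha).ne']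

theorem sub_add_one_mul_gbinom_add_one {a b : ℝ} (ha : a + 1 ≠ 0) (hab : a - b + 1 ≠ 0) :
    (a - b + 1) * gbinom (a + 1) b = (a + 1) * gbinom a b := by
  unfold gbinom
  rw [show a + 1 - b + 1 = (a - b + 1) + 1 by ring, Gamma_add_one ha, Gamma_add_one hab]
  field_simp

theorem add_one_mul_gbinom_add_one_add_one {a b : ℝ} (ha : a + 1 ≠ 0) (hb : b + 1 ≠ 0) :
    (b + 1) * gbinom (a + 1) (b + 1) = (a + 1) * gbinom a b := by
  unfold gbinom
  rw [show a + 1 - (b + 1) + 1 = a - b + 1 by ring, Gamma_add_one ha, Gamma_add_one hb]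
  field_simp

noncomputable def lhsCoeff (v s : ℝ) : ℝ :=
  2 ^ (-s) * gbinom (2 * s + v) ((2 * s + v) / 2) * (gbinom (s + v) (v / 2))⁻¹

noncomputable def rhsCoeff (v : ℝ) (k : ℕ) : ℝ :=
  2 ^ (-2 * (k : ℝ)) * ((2 * k).choose k : ℝ) * (gbinom ((2 * k + v) / 2) k)⁻¹

section

variable {v : ℝ}

theorem lhsCoeff_zero (hv : -1 < v) : lhsCoeff v 0 = 1 := by
  have : 0 < gbinom v (v / 2) := gbinom_pos (by linarith) (by linarith) (by linarith)
  simp [lhsCoeff, this.ne']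

theorem lhsCoeff_add_one (hv : -1 < v) {s : ℝ} (hs : 0 ≤ s) :
    (v + 1 + s) * lhsCoeff v (s + 1) = (v + 1 + 2 * s) * lhsCoeff v s := by
  have h1 := add_one_mul_gbinom_add_one_add_one (a := 2 * s + v + 1) (b := s + v / 2)
    (by linarith) (by linarith)
  have h2 := sub_add_one_mul_gbinom_add_one (a := 2 * s + v) (b := s + v / 2)
    (by linarith) (by linarith)
  have h3 := sub_add_one_mul_gbinom_add_one (a := s + v) (b := v / 2) (by linarith) (by linarith)
  have hpow : (2 : ℝ) ^ (-(s + 1)) = 2 ^ (-s) / 2 := by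
    rw [neg_add, rpow_add two_pos, rpow_neg_one, div_eq_mul_inv]
  unfold lhsCoeff
  rw [hpow, show 2 * (s + 1) + v = 2 * s + v + 1 + 1 by ring,
    show (2 * s + v + 1 + 1) / 2 = s + v / 2 + 1 by ring, show s + 1 + v = s + v + 1 by ring,
    show (2 * s + v) / 2 = s + v / 2 by ring]
  rw [show 2 * s + v - (s + v / 2) + 1 = s + v / 2 + 1 by ring] at h2
  rw [show s + v - v / 2 + 1 = s + v / 2 + 1 by ring] at h3
  have ht : s + v / 2 + 1 ≠ 0 := by linarith
  have hsv : s + v + 1 ≠ 0 := by linarith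
  set t := s + v / 2 + 1
  rw [mul_comm, ← eq_div_iff ht] at h1 h2 h3
  rw [h1, h2, h3]
  field_simp
  ring

theorem rhsCoeff_zero (hv : -1 < v) : rhsCoeff v 0 = 1 := by
  simp [rhsCoeff, gbinom_zero_right (a := v / 2) (by linarith)]

theorem rhsCoeff_succ (hv : -1 < v) (k : ℕ) :
    (v + 2 * k + 2) * rhsCoeff v (k + 1) = (2 * k + 1) * rhsCoeff v k := by
  have hk : (0 : ℝ) ≤ k := k.cast_nonneg
  have hB := add_one_mul_gbinom_add_one_add_one (a := k + v / 2) (b := k) (by linarith)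
    (by linarith)
  have hC : ((k : ℝ) + 1) * ((2 * (k + 1)).choose (k + 1) : ℕ)
      = 2 * (2 * k + 1) * (2 * k).choose k := by
    have := Nat.succ_mul_centralBinom_succ k
    rw [Nat.centralBinom_eq_two_mul_choose, Nat.centralBinom_eq_two_mul_choose] at this
    exact_mod_cast this
  have hpow : (2 : ℝ) ^ (-2 * ((k : ℝ) + 1)) = 2 ^ (-2 * (k : ℝ)) / 4 := by
    rw [show -2 * ((k : ℝ) + 1) = -2 * k + (-2) by ring, rpow_add two_pos]
    norm_num [div_eq_mul_inv]
  have hk1 : (k : ℝ) + 1 ≠ 0 := by linarith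
  unfold rhsCoeff
  push_cast
  rw [hpow, show (2 * ((k : ℝ) + 1) + v) / 2 = k + v / 2 + 1 by ring,
    show (2 * (k : ℝ) + v) / 2 = k + v / 2 by ring]
  rw [mul_comm, ← eq_div_iff hk1] at hB hC
  have ht : (k : ℝ) + v / 2 + 1 ≠ 0 := by linarith
  rw [hB, hC, show v + 2 * k + 2 = 2 * ((k : ℝ) + v / 2 + 1) by ring]
  set t := (k : ℝ) + v / 2 + 1
  field_simp
  ring

/-- `μᵢ = ∫ tⁱ (1 - t²)^((v-1)/2) dt / ∫ (1 - t²)^((v-1)/2) dt` on `[-1, 1]`. -/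
noncomputable def gegenbauerMoment (v : ℝ) : ℕ → ℝ
  | 0 => 1
  | 1 => 0
  | i + 2 => (i + 1) / (v + i + 2) * gegenbauerMoment v i

namespace gegenbauerMoment

theorem odd (j : ℕ) : gegenbauerMoment v (2 * j + 1) = 0 := by
  induction j with
  | zero => rfl
  | succ j ih => simp [gegenbauerMoment, show 2 * (j + 1) + 1 = 2 * j + 1 + 2 by ring, ih]

theorem mul_add_two (hv : -1 < v) (i : ℕ) :
    (v + i + 2) * gegenbauerMoment v (i + 2) = (i + 1) * gegenbauerMoment v i := by
  have : v + i + 2 ≠ 0 := by linarith [i.cast_nonneg (α := ℝ)]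
  rw [gegenbauerMoment]
  field_simp

theorem two_mul_eq_rhsCoeff (hv : -1 < v) (k : ℕ) :
    gegenbauerMoment v (2 * k) = rhsCoeff v k := by
  induction k with
  | zero => exact (rhsCoeff_zero hv).symm
  | succ k ih =>
    have hvk : v + 2 * k + 2 ≠ 0 := by linarith [k.cast_nonneg (α := ℝ)]
    refine mul_left_cancel₀ hvk ?_
    rw [rhsCoeff_succ hv, ← ih, show 2 * (k + 1) = 2 * k + 2 by ring]
    exact_mod_cast mul_add_two hv (2 * k)

end gegenbauerMoment

noncomputable def momentFunctional (v : ℝ) : ℝ[X] →ₗ[ℝ] ℝ :=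
  lsum fun i => gegenbauerMoment v i • LinearMap.id

namespace momentFunctional

theorem X_pow (i : ℕ) : momentFunctional v (X ^ i) = gegenbauerMoment v i := by
  simp [momentFunctional, X_pow_eq_monomial]

theorem derivative_mul_one_sub_X_sq (hv : -1 < v) (p : ℝ[X]) :
    momentFunctional v (derivative p * (1 - X ^ 2)) = (v + 1) * momentFunctional v (X * p) := by
  have hmonomial (n : ℕ) : momentFunctional v (derivative (X ^ n) * (1 - X ^ 2))
      = (v + 1) * momentFunctional v (X ^ (n + 1)) := by
    cases n with
    | zero => rw [X_pow]; simp [gegenbauerMoment]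
    | succ m =>
      have hrec := gegenbauerMoment.mul_add_two hv m
      rw [derivative_X_pow, mul_sub, mul_one, mul_assoc, ← pow_add, map_sub, LinearMap.map_C_mul,
        LinearMap.map_C_mul, X_pow, X_pow, X_pow, smul_eq_mul, smul_eq_mul]
      push_cast at hrec ⊢
      linarith
  induction p using Polynomial.induction_on' with
  | add p q hp hq => simp only [add_mul, mul_add, map_add, hp, hq]
  | monomial n a =>
    rw [← C_mul_X_pow_eq_monomial, derivative_C_mul, mul_assoc, LinearMap.map_C_mul, hmonomial,
      mul_left_comm X, LinearMap.map_C_mul, ← pow_succ', smul_eq_mul, smul_eq_mul, mul_left_comm]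

theorem X_add_one_pow_succ (hv : -1 < v) (k : ℕ) :
    (v + 1 + k) * momentFunctional v ((X + 1) ^ (k + 1))
      = (v + 1 + 2 * k) * momentFunctional v ((X + 1) ^ k) := by
  have hder : derivative ((X + 1 : ℝ[X]) ^ k) * (1 - X ^ 2)
      = C (2 * k : ℝ) * (X + 1) ^ k - C (k : ℝ) * (X + 1) ^ (k + 1) := by
    cases k with
    | zero => simp
    | succ k =>
      rw [← C_1, derivative_X_add_C_pow]
      simp only [C_1, Nat.add_sub_cancel, map_mul, map_natCast, map_ofNat]
      push_cast
      ring
  have hX : X * (X + 1 : ℝ[X]) ^ k = (X + 1) ^ (k + 1) - (X + 1) ^ k := by ring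
  have hibp := derivative_mul_one_sub_X_sq hv ((X + 1) ^ k)
  rw [hder, hX, map_sub, map_sub, LinearMap.map_C_mul, LinearMap.map_C_mul, smul_eq_mul,
    smul_eq_mul] at hibp
  linarith

theorem X_add_one_pow_eq_lhsCoeff (hv : -1 < v) (k : ℕ) :
    momentFunctional v ((X + 1) ^ k) = lhsCoeff v k := by
  induction k with
  | zero => simpa [lhsCoeff_zero hv, gegenbauerMoment] using X_pow (v := v) 0
  | succ k ih =>
    have hk : (0 : ℝ) ≤ k := k.cast_nonneg
    refine mul_left_cancel₀ (by linarith : v + 1 + k ≠ 0) ?_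
    rw [X_add_one_pow_succ hv, ih, Nat.cast_succ, lhsCoeff_add_one hv hk]

end momentFunctional

end

theorem polynomial_identity_one_sub_x (n : ℕ) (v : ℝ) (hv : v > -1) (x : ℝ) :
    ∑ k ∈ Finset.range (n + 1),
      (n.choose k : ℝ) * (2 : ℝ) ^ (-(k : ℝ)) *
        gbinom (2 * (k : ℝ) + v) ((2 * (k : ℝ) + v) / 2) *
        (gbinom ((k : ℝ) + v) (v / 2))⁻¹ * (1 - x) ^ k * x ^ (n - k)
    = ∑ k ∈ Finset.range (n / 2 + 1),
        (n.choose (2 * k) : ℝ) * (2 : ℝ) ^ (-2 * (k : ℝ)) * ((2 * k).choose k : ℝ) *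
          (gbinom ((2 * (k : ℝ) + v) / 2) (k : ℝ))⁻¹ * (1 - x) ^ (2 * k) := by
  calc _ = ∑ k ∈ range (n + 1),
        (n.choose k : ℝ) * momentFunctional v ((X + 1) ^ k) * (1 - x) ^ k * x ^ (n - k) := by
        refine sum_congr rfl fun k _ => ?_
        rw [momentFunctional.X_add_one_pow_eq_lhsCoeff hv, lhsCoeff]
        ring
    _ = ∑ i ∈ range (n + 1), (n.choose i : ℝ) * gegenbauerMoment v i * (1 - x) ^ i := by
        simp [sum_choose_mul_map_X_add_one_pow, momentFunctional.X_pow]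
    _ = ∑ j ∈ range (n / 2 + 1),
        (n.choose (2 * j) : ℝ) * gegenbauerMoment v (2 * j) * (1 - x) ^ (2 * j) :=
        sum_range_succ_eq_sum_even_of_odd_eq_zero _ (fun j => by simp [gegenbauerMoment.odd]) n
    _ = _ := by
        refine sum_congr rfl fun k _ => ?_
        rw [gegenbauerMoment.two_mul_eq_rhsCoeff hv, rhsCoeff]
        ring
end
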